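/- Let (A,∘,[·,·]) be a Gel'fand-Dorfman bialgebra over K of codimension 1 in a vector space E. Assume the Lie algebra (A,[·,·]) is perfect ([A,A] = A), every derivation of (A,[·,·]) is inner, and the center of (A,[·,·]) is trivial. Then Extd(E,A) is in bijection with SF5(A)/≈, where SF5(A) is the set of GD flag datums with p = q = η = 0, D = 0 and a1 = 0, written (S,T,k), and (S,T,k) ≈ (S',T',k') iff there exists β ∈ K* with S = βS', T = βT' and k = βk'. -/

import Mathlib

/-!
Write `E = A ⊕ K x`. A datum `(S, T, k)` of `SF5(A)` defines the extension in which `[x, E] = 0`,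
`x ∘ a = S a`, `a ∘ x = T a` and `x ∘ x = k x`; its Gel'fand-Dorfman axioms, evaluated on triples
containing `x`, are exactly the conditions defining `SF5(A)`. Rescaling `x` by `β` rescales the
datum by `β`.

Conversely, take any GD structure on `E` extending `A`. By perfectness the `x`-component of
`[x, ·]` vanishes on `A`, so `[x, ·]` restricts to a derivation of `A`, which is inner, `[a0, ·]`;
replacing `x` by `x - a0` gives `[x, A] = 0`. The compatibility condition then shows, again by
perfectness, that `x ∘ A` and `A ∘ x` lie in `A`, and, as the centre is trivial, that `x ∘ x` lies
in `K x`: the structure comes from a datum of `SF5(A)`. Finally an isomorphism fixing `A` commutes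
with `[x, ·]`, which vanishes on `A`, so by triviality of the centre it sends `x` to some `β x`;
this `β` relates the two data.
-/

namespace GDExt

def IsNovikov {M : Type*} [AddCommGroup M] (mul : M → M → M) : Prop :=
  (∀ a b c, mul (mul a b) c - mul a (mul b c) = mul (mul b a) c - mul b (mul a c)) ∧
  ∀ a b c, mul (mul a b) c = mul (mul a c) b

def IsLieBracket {M : Type*} [AddCommGroup M] (br : M → M → M) : Prop :=
  (∀ a, br a a = 0) ∧ ∀ a b c, br a (br b c) = br (br a b) c + br b (br a c)

def IsGD {M : Type*} [AddCommGroup M] (mul br : M → M → M) : Prop :=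
  IsNovikov mul ∧ IsLieBracket br ∧
  ∀ a b c, br a (mul b c) - br c (mul b a) + mul (br b a) c - mul (br b c) a - mul b (br a c) = 0

variable {K : Type*} [Field K]
variable {A V : Type*} [AddCommGroup A] [Module K A] [AddCommGroup V] [Module K V]

/-- First component bilinear product of the unified product `A ♮ V`. -/
def uniMul (circ : A →ₗ[K] A →ₗ[K] A) (lA rA : A →ₗ[K] Module.End K V)
    (lV rV : V →ₗ[K] Module.End K A) (f : V →ₗ[K] V →ₗ[K] A)
    (st : V →ₗ[K] V →ₗ[K] V) : A × V → A × V → A × V :=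
  fun p q =>
    (circ p.1 q.1 + lV p.2 q.1 + rV q.2 p.1 + f p.2 q.2,
     st p.2 q.2 + lA p.1 q.2 + rA q.1 p.2)

/-- Bracket of the unified product `A ♮ V`. -/
def uniBr (brk : A →ₗ[K] A →ₗ[K] A) (tl : V →ₗ[K] A →ₗ[K] V) (tr : V →ₗ[K] A →ₗ[K] A)
    (hm : V →ₗ[K] V →ₗ[K] A) (vbr : V →ₗ[K] V →ₗ[K] V) : A × V → A × V → A × V :=
  fun p q =>
    (brk p.1 q.1 + tr p.2 q.1 - tr q.2 p.1 + hm p.2 q.2,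
     vbr p.2 q.2 + tl p.2 q.1 - tl q.2 p.1)

end GDExt

namespace GDExt

variable (K : Type*) [Field K]
variable (A : Type*) [AddCommGroup A] [Module K A]

/-- The data of a Gel'fand-Dorfman flag datum. -/
structure FlagData where
  p : A →ₗ[K] K
  q : A →ₗ[K] K
  S : A →ₗ[K] A
  T : A →ₗ[K] A
  a1 : A
  k : K
  eta : A →ₗ[K] K
  D : A →ₗ[K] A

variable {K A}

/-- Conditions (FN1)-(FN10), (TD1)-(TD2) and (GF1)-(GF6) for a GD flag datum of the
GD bialgebra `(A, circ, brk)`. -/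
def IsFlagDatum (circ brk : A →ₗ[K] A →ₗ[K] A) (d : FlagData K A) : Prop :=
  -- (FN1)
  (∀ a b : A, d.p (circ a b) = d.p (circ b a)) ∧
  (∀ a b : A, d.q (circ a b) = d.q a * d.q b) ∧
  -- (FN2)
  (∀ a b : A, d.S (circ a b) = circ (d.S a) b + circ a (d.S b) + (d.q a - d.p a) • d.S b
      + d.q b • d.T a - circ (d.T a) b) ∧
  -- (FN3)
  (∀ a b : A, d.T (circ a b) - d.T (circ b a)
      = d.p b • d.T a - d.p a • d.T b + circ a (d.T b) - circ b (d.T a)) ∧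
  -- (FN4)
  (∀ a : A, d.T (d.T a) = d.T (d.S a) - d.S (d.T a) + circ a d.a1
      + (d.q a - 2 * d.p a) • d.a1 + d.k • d.T a) ∧
  -- (FN5)
  (∀ a : A, d.p (d.S a) - d.p (d.T a) = d.q (d.T a) + d.k * (d.p a - d.q a)) ∧
  -- (FN6)
  (∀ a b : A, circ (d.S a) b + d.q a • d.S b = circ (d.S b) a + d.q b • d.S a) ∧
  -- (FN7)
  (∀ a b : A, d.T (circ a b) = circ (d.T a) b + d.p a • d.S b) ∧
  -- (FN8)
  (∀ a b : A, d.p (circ a b) = d.p a * d.q b) ∧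
  -- (FN9)
  (∀ a : A, d.T (d.S a) = circ d.a1 a + d.k • d.S a - d.q a • d.a1) ∧
  -- (FN10)
  (∀ a : A, d.p (d.S a) = 0) ∧
  -- (TD1)
  (∀ a b : A, d.eta (brk a b) = 0) ∧
  -- (TD2)
  (∀ a b : A, d.D (brk a b) = brk (d.D a) b + brk a (d.D b) + d.eta a • d.D b - d.eta b • d.D a) ∧
  -- (GF1)
  (∀ a b : A, brk a (d.T b) - d.p b • d.D a - d.D (circ b a) + d.T (brk b a)
      + circ (d.D b) a + d.eta b • d.S a + circ b (d.D a) + d.eta a • d.T b = 0) ∧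
  -- (GF2)
  (∀ a b : A, d.p (brk b a) + d.eta b * d.q a - d.eta (circ b a) = 0) ∧
  -- (GF3)
  (∀ a b : A, brk a (d.S b) - d.q b • d.D a - brk b (d.S a) + d.q a • d.D b
      + circ (d.D a) b + d.eta a • d.S b - circ (d.D b) a - d.eta b • d.S a
      - d.S (brk a b) = 0) ∧
  -- (GF4)
  (∀ a b : A, d.q (brk a b) = 0) ∧
  -- (GF5)
  (∀ a : A, brk a d.a1 - d.k • d.D a - d.D (d.S a) + d.T (d.D a)
      + (2 * d.eta a) • d.a1 + d.S (d.D a) = 0) ∧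
  -- (GF6)
  (∀ a : A, d.k * d.eta a - d.eta (d.S a) + d.p (d.D a) + d.q (d.D a) = 0)

end GDExt

namespace GDExt

variable {K E : Type*} [Field K] [AddCommGroup E] [Module K E]

/-- The GD bialgebra structures on `E` containing the GD bialgebra `(A, circ, brk)`
as a subalgebra (i.e. restricting to the given operations on `A`). -/
def GDStrOn (A : Submodule K E) (circ brk : ↥A →ₗ[K] ↥A →ₗ[K] ↥A) : Type _ :=
  {s : (E →ₗ[K] E →ₗ[K] E) × (E →ₗ[K] E →ₗ[K] E) //
    IsGD (fun u v => s.1 u v) (fun u v => s.2 u v) ∧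
    ∀ a b : ↥A, s.1 a b = ((circ a b : ↥A) : E) ∧ s.2 a b = ((brk a b : ↥A) : E)}

/-- Equivalence of GD bialgebra structures on `E` containing `A` as a subalgebra:
there is a GD bialgebra isomorphism whose restriction to `A` is the identity. -/
def GDStrEquiv (A : Submodule K E) (circ brk : ↥A →ₗ[K] ↥A →ₗ[K] ↥A)
    (s s' : GDStrOn A circ brk) : Prop :=
  ∃ φ : E ≃ₗ[K] E,
    (∀ u v : E, φ (s.1.1 u v) = s'.1.1 (φ u) (φ v)) ∧
    (∀ u v : E, φ (s.1.2 u v) = s'.1.2 (φ u) (φ v)) ∧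
    (∀ a : ↥A, φ (a : E) = (a : E))

end GDExt


namespace GDExt

section Pullback

variable {M N : Type*} [AddCommGroup M] [AddCommGroup N] (ψ : N ≃+ M)

theorem IsNovikov.pullback {mul : M → M → M} (h : IsNovikov mul) :
    IsNovikov fun u v => ψ.symm (mul (ψ u) (ψ v)) := by
  refine ⟨fun a b c => ?_, fun a b c => ?_⟩ <;>
    simp only [AddEquiv.apply_symm_apply, ← map_sub]
  exacts [congrArg ψ.symm (h.1 _ _ _), congrArg ψ.symm (h.2 _ _ _)]

theorem IsLieBracket.pullback {br : M → M → M} (h : IsLieBracket br) :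
    IsLieBracket fun u v => ψ.symm (br (ψ u) (ψ v)) := by
  refine ⟨fun a => ?_, fun a b c => ?_⟩ <;>
    simp only [AddEquiv.apply_symm_apply, ← map_add]
  exacts [by rw [h.1, map_zero], congrArg ψ.symm (h.2 _ _ _)]

theorem IsGD.pullback {mul br : M → M → M} (h : IsGD mul br) :
    IsGD (fun u v => ψ.symm (mul (ψ u) (ψ v))) (fun u v => ψ.symm (br (ψ u) (ψ v))) := by
  refine ⟨h.1.pullback ψ, h.2.1.pullback ψ, fun a b c => ?_⟩
  simp only [AddEquiv.apply_symm_apply, ← map_add, ← map_sub]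
  rw [h.2.2, map_zero]

end Pullback

theorem nonempty_quot_equiv {α β : Type*} {r : α → α → Prop} {s : β → β → Prop}
    (hs : Equivalence s) (f : α → β) (hf : ∀ a a', r a a' ↔ s (f a) (f a'))
    (hsurj : ∀ b, ∃ a, s (f a) b) : Nonempty (Quot r ≃ Quot s) := by
  refine ⟨Equiv.ofBijective (Quot.map f fun a a' => (hf a a').1) ⟨?_, ?_⟩⟩
  · rintro ⟨a⟩ ⟨a'⟩ h
    exact Quot.sound ((hf a a').2 (hs.eqvGen_iff.1 ((Quot.eq (r := s)).1 h)))
  · rintro ⟨b⟩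
    obtain ⟨a, ha⟩ := hsurj b
    exact ⟨Quot.mk r a, Quot.sound ha⟩

theorem linearMap_eq_zero_of_perfect {K A M : Type*} [Field K] [AddCommGroup A] [Module K A]
    [AddCommGroup M] [Module K M] {brk : A →ₗ[K] A →ₗ[K] A}
    (hperf : Submodule.span K {c : A | ∃ a b : A, c = brk a b} = ⊤) {f : A →ₗ[K] M}
    (hf : ∀ a b, f (brk a b) = 0) : f = 0 :=
  LinearMap.ext_on hperf (by rintro _ ⟨a, b, rfl⟩; exact hf a b)

section Decomposition

variable {K E : Type*} [Field K] [AddCommGroup E] [Module K E] {A : Submodule K E} {x : E}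

noncomputable def proj (hc : IsCompl A (K ∙ x)) : E →ₗ[K] A :=
  A.projectionOnto _ hc

noncomputable def coord (hx0 : x ≠ 0) (hc : IsCompl A (K ∙ x)) : E →ₗ[K] K :=
  LinearMap.ofIsCompl hc 0 (LinearEquiv.coord K E x hx0)

theorem linearMap_ext_of_codisjoint {M : Type*} [AddCommGroup M] [Module K M]
    (hAx : Codisjoint A (K ∙ x)) {f g : E →ₗ[K] M} (hA : ∀ a : A, f a = g a) (hx : f x = g x) :
    f = g :=
  LinearMap.ext_on_codisjoint hAx (fun a ha => hA ⟨a, ha⟩) fun _ hy => by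
    obtain ⟨t, rfl⟩ := Submodule.mem_span_singleton.1 hy
    simp [hx]

theorem linearMap₂_ext_of_codisjoint {M : Type*} [AddCommGroup M] [Module K M]
    (hAx : Codisjoint A (K ∙ x)) {f g : E →ₗ[K] E →ₗ[K] M} (hAA : ∀ a b : A, f a b = g a b)
    (hAself : ∀ a : A, f a x = g a x) (hselfA : ∀ a : A, f x a = g x a) (hself : f x x = g x x) :
    f = g :=
  linearMap_ext_of_codisjoint hAx (fun a => linearMap_ext_of_codisjoint hAx (hAA a) (hAself a))
    (linearMap_ext_of_codisjoint hAx hselfA hself)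

variable (hx0 : x ≠ 0) (hc : IsCompl A (K ∙ x))

@[simp] theorem proj_coe (a : A) : proj hc a = a :=
  Submodule.projectionOnto_apply_left hc a

@[simp] theorem proj_self : proj hc x = 0 :=
  Submodule.projectionOnto_apply_right hc ⟨x, Submodule.mem_span_singleton_self x⟩

@[simp] theorem coord_coe (a : A) : coord hx0 hc a = 0 :=
  LinearMap.ofIsCompl_apply_left hc a

@[simp] theorem coord_self : coord hx0 hc x = 1 :=
  (LinearMap.ofIsCompl_apply_right hc ⟨x, _⟩).trans (LinearEquiv.coord_self K E x hx0)

theorem proj_add_coord_smul (e : E) : (proj hc e : E) + coord hx0 hc e • x = e :=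
  LinearMap.congr_fun (linearMap_ext_of_codisjoint hc.codisjoint
    (f := A.subtype ∘ₗ proj hc + (coord hx0 hc).smulRight x) (g := LinearMap.id)
    (by simp) (by simp)) e

theorem ext_proj_coord {e e' : E} (hP : proj hc e = proj hc e')
    (hL : coord hx0 hc e = coord hx0 hc e') : e = e' := by
  rw [← proj_add_coord_smul hx0 hc e, ← proj_add_coord_smul hx0 hc e', hP, hL]

theorem coe_proj_of_coord_eq_zero {e : E} (he : coord hx0 hc e = 0) : (proj hc e : E) = e := by
  simpa [he] using proj_add_coord_smul hx0 hc e

theorem coord_smul_of_proj_eq_zero {e : E} (he : proj hc e = 0) : coord hx0 hc e • x = e := by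
  simpa [he] using proj_add_coord_smul hx0 hc e

noncomputable def fixingMap (y : E) : E →ₗ[K] E :=
  A.subtype ∘ₗ proj hc + (coord hx0 hc).smulRight y

@[simp] theorem proj_fixingMap (y e : E) :
    proj hc (fixingMap hx0 hc y e) = proj hc e + coord hx0 hc e • proj hc y := by
  simp [fixingMap]

@[simp] theorem coord_fixingMap (y e : E) :
    coord hx0 hc (fixingMap hx0 hc y e) = coord hx0 hc e * coord hx0 hc y := by
  simp [fixingMap]

noncomputable def fixingEquiv (y : E) (hy : coord hx0 hc y ≠ 0) : E ≃ₗ[K] E :=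
  LinearEquiv.ofLinearMap (fixingMap hx0 hc y)
    (fixingMap hx0 hc ((coord hx0 hc y)⁻¹ • (x - proj hc y)))
    (LinearMap.ext fun _ => ext_proj_coord hx0 hc (by simp [smul_smul]) (by simp [hy]))
    (LinearMap.ext fun _ => ext_proj_coord hx0 hc (by simp [smul_smul, hy]) (by simp [hy]))

@[simp] theorem fixingEquiv_coe (y : E) (hy : coord hx0 hc y ≠ 0) (a : A) :
    fixingEquiv hx0 hc y hy a = a := by
  simp [fixingEquiv, fixingMap]

@[simp] theorem fixingEquiv_self (y : E) (hy : coord hx0 hc y ≠ 0) :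
    fixingEquiv hx0 hc y hy x = y := by
  simp [fixingEquiv, fixingMap]

@[simp] theorem proj_fixingEquiv (y : E) (hy : coord hx0 hc y ≠ 0) (e : E) :
    proj hc (fixingEquiv hx0 hc y hy e) = proj hc e + coord hx0 hc e • proj hc y :=
  proj_fixingMap hx0 hc y e

@[simp] theorem coord_fixingEquiv (y : E) (hy : coord hx0 hc y ≠ 0) (e : E) :
    coord hx0 hc (fixingEquiv hx0 hc y hy e) = coord hx0 hc e * coord hx0 hc y :=
  coord_fixingMap hx0 hc y e

end Decomposition

section SF5

variable {K A : Type*} [Field K] [AddCommGroup A] [Module K A]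

/-- The conditions of a flag datum that survive when `p = q = η = 0`, `D = 0` and `a1 = 0`,
named after the paper's labels. -/
structure IsSF5 (circ brk : A →ₗ[K] A →ₗ[K] A) (S T : A →ₗ[K] A) (k : K) : Prop where
  fn2 : ∀ a b, S (circ a b) = circ (S a) b + circ a (S b) - circ (T a) b
  fn3 : ∀ a b, T (circ a b) - T (circ b a) = circ a (T b) - circ b (T a)
  fn4 : ∀ a, T (T a) = T (S a) - S (T a) + k • T a
  fn6 : ∀ a b, circ (S a) b = circ (S b) a
  fn7 : ∀ a b, T (circ a b) = circ (T a) b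
  fn9 : ∀ a, T (S a) = k • S a
  gf1 : ∀ a b, brk a (T b) + T (brk b a) = 0
  gf3 : ∀ a b, brk a (S b) - brk b (S a) - S (brk a b) = 0

theorem isFlagDatum_iff_isSF5 {circ brk : A →ₗ[K] A →ₗ[K] A} {S T : A →ₗ[K] A} {k : K} :
    IsFlagDatum circ brk ⟨0, 0, S, T, 0, k, 0, 0⟩ ↔ IsSF5 circ brk S T k := by
  simp only [IsFlagDatum, LinearMap.zero_apply, implies_true, mul_zero, sub_self, zero_smul,
    add_zero, zero_add, map_zero, smul_zero, sub_zero, and_self, and_true, true_and]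
  exact ⟨fun ⟨h2, h3, h4, h6, h7, h9, g1, g3⟩ => ⟨h2, h3, h4, h6, h7, h9, g1, g3⟩,
    fun ⟨h2, h3, h4, h6, h7, h9, g1, g3⟩ => ⟨h2, h3, h4, h6, h7, h9, g1, g3⟩⟩

theorem isSF5_of_isFlagDatum {circ brk : A →ₗ[K] A →ₗ[K] A} {d : FlagData K A}
    (hd : IsFlagDatum circ brk d ∧ d.p = 0 ∧ d.q = 0 ∧ d.eta = 0 ∧ d.D = 0 ∧ d.a1 = 0) :
    IsSF5 circ brk d.S d.T d.k := by
  obtain ⟨p, q, S, T, a1, k, eta, D⟩ := d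
  obtain ⟨h, rfl, rfl, rfl, rfl, rfl⟩ := hd
  exact isFlagDatum_iff_isSF5.1 h

end SF5

section FlagProduct

variable {K E : Type*} [Field K] [AddCommGroup E] [Module K E] {A : Submodule K E} {x : E}
  (hx0 : x ≠ 0) (hc : IsCompl A (K ∙ x))

/-- `(a + s x) ∘ (b + t x) = a ∘ b + s S(b) + t T(a) + s t k x`. -/
noncomputable def flagMul (circ : A →ₗ[K] A →ₗ[K] A) (S T : A →ₗ[K] A) (k : K) :
    E →ₗ[K] E →ₗ[K] E :=
  LinearMap.mk₂ K
    (fun u v => ((circ (proj hc u) (proj hc v) + coord hx0 hc u • S (proj hc v)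
        + coord hx0 hc v • T (proj hc u) : A) : E) + (coord hx0 hc u * coord hx0 hc v * k) • x)
    (fun _ _ _ => by
      simp only [map_add, LinearMap.add_apply, Submodule.coe_add, Submodule.coe_smul]; module)
    (fun _ _ _ => by
      simp only [map_smul, LinearMap.smul_apply, Submodule.coe_add, Submodule.coe_smul, smul_eq_mul]
      module)
    (fun _ _ _ => by simp only [map_add, Submodule.coe_add, Submodule.coe_smul]; module)
    (fun _ _ _ => by simp only [map_smul, Submodule.coe_add, Submodule.coe_smul]; module)

noncomputable def flagBr (brk : A →ₗ[K] A →ₗ[K] A) : E →ₗ[K] E →ₗ[K] E :=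
  (brk.compl₁₂ (proj hc) (proj hc)).compr₂ A.subtype

variable {circ brk : A →ₗ[K] A →ₗ[K] A} {S T : A →ₗ[K] A} {k : K}

theorem flagMul_apply (u v : E) : flagMul hx0 hc circ S T k u v =
    ((circ (proj hc u) (proj hc v) + coord hx0 hc u • S (proj hc v)
      + coord hx0 hc v • T (proj hc u) : A) : E) + (coord hx0 hc u * coord hx0 hc v * k) • x :=
  rfl

@[simp] theorem proj_flagMul (u v : E) : proj hc (flagMul hx0 hc circ S T k u v) =
    circ (proj hc u) (proj hc v) + coord hx0 hc u • S (proj hc v)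
      + coord hx0 hc v • T (proj hc u) := by
  simp [flagMul_apply]

@[simp] theorem coord_flagMul (u v : E) :
    coord hx0 hc (flagMul hx0 hc circ S T k u v) = coord hx0 hc u * coord hx0 hc v * k := by
  simp [flagMul_apply]

@[simp] theorem flagMul_coe_coe (a b : A) : flagMul hx0 hc circ S T k a b = circ a b := by
  simp [flagMul_apply]

@[simp] theorem flagMul_coe_self (a : A) : flagMul hx0 hc circ S T k a x = T a := by
  simp [flagMul_apply]

@[simp] theorem flagMul_self_coe (a : A) : flagMul hx0 hc circ S T k x a = S a := by
  simp [flagMul_apply]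

@[simp] theorem flagMul_self_self : flagMul hx0 hc circ S T k x x = k • x := by
  simp [flagMul_apply]

@[simp] theorem flagBr_apply (u v : E) : flagBr hc brk u v = brk (proj hc u) (proj hc v) :=
  rfl

theorem isSF5_of_isGD_flag
    (h : IsGD (fun u v => flagMul hx0 hc circ S T k u v) (fun u v => flagBr hc brk u v)) :
    IsSF5 circ brk S T k := by
  obtain ⟨⟨hN1, hN2⟩, -, hGD⟩ := h
  constructor
  · intro a b
    have := congrArg (proj hc) (hN1 a x b)
    simp only [flagMul_coe_self, flagMul_coe_coe, flagMul_self_coe, map_sub, proj_coe] at this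
    linear_combination (norm := module) this
  · intro a b
    have := congrArg (proj hc) (hN1 a b x)
    simp only [flagMul_coe_coe, flagMul_coe_self, map_sub, proj_coe] at this
    linear_combination (norm := module) this
  · intro a
    have := congrArg (proj hc) (hN1 a x x)
    simp only [flagMul_coe_self, flagMul_self_self, map_smul, map_sub, proj_coe,
      flagMul_self_coe] at this
    linear_combination (norm := module) this
  · intro a b
    simpa using hN2 x a b
  · intro a b
    simpa using hN2 a b x
  · intro a
    simpa using congrArg (proj hc) (hN2 x a x)
  · intro a b
    have := congrArg (proj hc) (hGD x b a)
    simp only [flagMul_coe_coe, flagBr_apply, proj_self, map_zero, proj_coe, LinearMap.zero_apply,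
      ZeroMemClass.coe_zero, flagMul_coe_self, zero_sub, add_zero, sub_zero, map_sub,
      map_neg] at this
    linear_combination (norm := module) -this
  · intro a b
    have := congrArg (proj hc) (hGD a x b)
    simp only [flagMul_self_coe, flagBr_apply, proj_coe, proj_self, map_zero, LinearMap.zero_apply,
      ZeroMemClass.coe_zero, add_zero, sub_zero, map_sub] at this
    exact this

theorem isGD_flag_of_isSF5 (hGD : IsGD (fun a b => circ a b) (fun a b => brk a b))
    (h : IsSF5 circ brk S T k) :
    IsGD (fun u v => flagMul hx0 hc circ S T k u v) (fun u v => flagBr hc brk u v) := by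
  obtain ⟨⟨hN1, hN2⟩, ⟨hLalt, hLjac⟩, hGDc⟩ := hGD
  refine ⟨⟨fun u v w => ?_, fun u v w => ?_⟩, ⟨fun u => ?_, fun u v w => ?_⟩, fun u v w => ?_⟩
  · refine ext_proj_coord hx0 hc ?_ ?_
    · simp only [map_sub, map_add, map_smul, proj_flagMul, coord_flagMul, LinearMap.add_apply,
        LinearMap.smul_apply]
      set P := proj hc
      set L := coord hx0 hc
      linear_combination (norm := module) hN1 (P u) (P v) (P w)
        + L v • h.fn2 (P u) (P w) - L u • h.fn2 (P v) (P w) + L w • h.fn3 (P u) (P v)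
        + (L w * L v) • h.fn4 (P u) - (L w * L u) • h.fn4 (P v)
    · simp only [map_sub, coord_flagMul]; ring
  · refine ext_proj_coord hx0 hc ?_ ?_
    · simp only [map_add, map_smul, proj_flagMul, coord_flagMul, LinearMap.add_apply,
        LinearMap.smul_apply]
      set P := proj hc
      set L := coord hx0 hc
      linear_combination (norm := module) hN2 (P u) (P v) (P w)
        + L u • h.fn6 (P v) (P w) + L w • h.fn7 (P u) (P v) - L v • h.fn7 (P u) (P w)
        + (L w * L u) • h.fn9 (P v) - (L v * L u) • h.fn9 (P w)
    · simp only [coord_flagMul]; ring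
  · simpa using congrArg ((↑) : A → E) (hLalt (proj hc u))
  · simpa using congrArg ((↑) : A → E) (hLjac (proj hc u) (proj hc v) (proj hc w))
  · refine ext_proj_coord hx0 hc ?_ ?_
    · simp only [map_sub, map_add, map_smul, map_zero, proj_flagMul, flagBr_apply, proj_coe,
        coord_coe, zero_smul, add_zero]
      set P := proj hc
      set L := coord hx0 hc
      linear_combination (norm := module) hGDc (P u) (P v) (P w)
        + L v • h.gf3 (P u) (P w) + L w • h.gf1 (P u) (P v) - L u • h.gf1 (P w) (P v)
    · simp

end FlagProduct

section Structures

variable {K E : Type*} [Field K] [AddCommGroup E] [Module K E] {A : Submodule K E}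
  {circ brk : A →ₗ[K] A →ₗ[K] A}

theorem gdStrEquiv_equivalence : Equivalence (GDStrEquiv A circ brk) where
  refl _ := ⟨LinearEquiv.refl K E, fun _ _ => rfl, fun _ _ => rfl, fun _ => rfl⟩
  symm := by
    rintro s s' ⟨φ, hmul, hbr, hA⟩
    refine ⟨φ.symm, fun u v => ?_, fun u v => ?_, fun a => ?_⟩
    · rw [φ.symm_apply_eq, hmul, φ.apply_symm_apply, φ.apply_symm_apply]
    · rw [φ.symm_apply_eq, hbr, φ.apply_symm_apply, φ.apply_symm_apply]
    · rw [φ.symm_apply_eq, hA]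
  trans := by
    rintro s s' s'' ⟨φ, hmul, hbr, hA⟩ ⟨ψ, hmul', hbr', hA'⟩
    exact ⟨φ.trans ψ, fun u v => by simp [hmul, hmul'], fun u v => by simp [hbr, hbr'],
      fun a => by simp [hA, hA']⟩

def GDStrOn.pullback (s : GDStrOn A circ brk) (ψ : E ≃ₗ[K] E) (hψ : ∀ a : A, ψ a = a) :
    GDStrOn A circ brk :=
  ⟨((s.1.1.compl₁₂ ψ.toLinearMap ψ.toLinearMap).compr₂ ψ.symm.toLinearMap,
      (s.1.2.compl₁₂ ψ.toLinearMap ψ.toLinearMap).compr₂ ψ.symm.toLinearMap),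
    s.2.1.pullback ψ.toAddEquiv,
    fun a b => by simp [hψ, (s.2.2 a b).1, (s.2.2 a b).2, LinearEquiv.symm_apply_eq]⟩

theorem GDStrOn.pullback_equiv (s : GDStrOn A circ brk) (ψ : E ≃ₗ[K] E) (hψ : ∀ a : A, ψ a = a) :
    GDStrEquiv A circ brk (s.pullback ψ hψ) s :=
  ⟨ψ, fun u v => by simp [pullback], fun u v => by simp [pullback], hψ⟩

end Structures

section Extensions

variable {K E : Type*} [Field K] [AddCommGroup E] [Module K E] {A : Submodule K E} {x : E}
  (hx0 : x ≠ 0) (hc : IsCompl A (K ∙ x)) {circ brk : A →ₗ[K] A →ₗ[K] A}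

noncomputable def flagStr (hGD : IsGD (fun a b => circ a b) (fun a b => brk a b))
    {S T : A →ₗ[K] A} {k : K} (h : IsSF5 circ brk S T k) : GDStrOn A circ brk :=
  ⟨(flagMul hx0 hc circ S T k, flagBr hc brk), isGD_flag_of_isSF5 hx0 hc hGD h,
    fun a b => by simp⟩

section Classification

variable (hGD : IsGD (fun a b => circ a b) (fun a b => brk a b)) {S T S' T' : A →ₗ[K] A}
  {k k' : K} (h : IsSF5 circ brk S T k) (h' : IsSF5 circ brk S' T' k')

theorem flagStr_equiv_of_smul {β : K} (hβ : β ≠ 0) (hS : S = β • S') (hT : T = β • T')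
    (hk : k = β * k') : GDStrEquiv A circ brk (flagStr hx0 hc hGD h) (flagStr hx0 hc hGD h') := by
  refine ⟨fixingEquiv hx0 hc (β • x) (by simpa using hβ), fun u v => ?_, fun u v => ?_,
    fixingEquiv_coe hx0 hc _ _⟩
  · refine ext_proj_coord hx0 hc ?_ ?_
    · simp [flagStr, hS, hT, smul_smul, mul_comm]
    · simp only [flagStr, coord_flagMul, coord_fixingEquiv, map_smul, coord_self, smul_eq_mul,
        mul_one, hk]
      ring
  · simp [flagStr]

theorem exists_smul_of_flagStr_equiv (hcenter : ∀ a : A, (∀ b : A, brk a b = 0) → a = 0)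
    (he : GDStrEquiv A circ brk (flagStr hx0 hc hGD h) (flagStr hx0 hc hGD h')) :
    ∃ β : K, β ≠ 0 ∧ S = β • S' ∧ T = β • T' ∧ k = β * k' := by
  obtain ⟨φ, hmul, hbr, hA⟩ := he
  simp only [flagStr] at hmul hbr
  have hφx : coord hx0 hc (φ x) • x = φ x :=
    coord_smul_of_proj_eq_zero hx0 hc
      (hcenter _ fun b => by simpa [hA] using (hbr x b).symm)
  set β := coord hx0 hc (φ x)
  have hβ : β ≠ 0 := by
    rintro h0
    rw [h0, zero_smul, ← map_zero φ] at hφx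
    exact hx0 (φ.injective hφx.symm)
  refine ⟨β, hβ, LinearMap.ext fun a => ?_, LinearMap.ext fun a => ?_, ?_⟩
  · exact Subtype.ext (by simpa [hA, ← hφx] using hmul x a)
  · exact Subtype.ext (by simpa [hA, ← hφx] using hmul a x)
  · have hk : k * β = β * (β * k') := by
      simpa [← hφx] using congrArg (coord hx0 hc) (hmul x x)
    exact mul_right_cancel₀ hβ (by linear_combination hk)

end Classification

theorem coord_apply_coe_of_restrict {b : E →ₗ[K] E →ₗ[K] E} (hb : ∀ a c : A, b a c = brk a c)
    (u : E) (c : A) : coord hx0 hc (b u c) = coord hx0 hc u * coord hx0 hc (b x c) := by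
  conv_lhs => rw [← proj_add_coord_smul hx0 hc u]
  simp [hb]

theorem coord_bracket_self_eq_zero
    (hperf : Submodule.span K {c : A | ∃ a b : A, c = brk a b} = ⊤) {b : E →ₗ[K] E →ₗ[K] E}
    (hLie : IsLieBracket fun u v => b u v) (hb : ∀ a c : A, b a c = brk a c) (a : A) :
    coord hx0 hc (b x a) = 0 := by
  have hη : coord hx0 hc ∘ₗ b x ∘ₗ A.subtype = 0 := by
    refine linearMap_eq_zero_of_perfect hperf fun a c => ?_
    have hjac : b x (b a c) = b (b x a) c + b a (b x c) := hLie.2 x a c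
    rw [← LinearMap.IsAlt.neg hLie.1 (b x c) a, ← sub_eq_add_neg, hb] at hjac
    have := congrArg (coord hx0 hc) hjac
    rw [map_sub, coord_apply_coe_of_restrict hx0 hc hb (b x a),
      coord_apply_coe_of_restrict hx0 hc hb (b x c), mul_comm, sub_self] at this
    exact this
  exact LinearMap.congr_fun hη a

theorem eq_flagBr_of_bracket_self_eq_zero {b : E →ₗ[K] E →ₗ[K] E}
    (hLie : IsLieBracket fun u v => b u v) (hb : ∀ a c : A, b a c = brk a c)
    (hbx : ∀ a : A, b x a = 0) : b = flagBr hc brk :=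
  linearMap₂_ext_of_codisjoint hc.codisjoint (by simp [hb])
    (fun a => by simp [← LinearMap.IsAlt.neg hLie.1 x a, hbx]) (by simp [hbx]) (by simp [hLie.1 x])

theorem exists_eq_flagMul (hperf : Submodule.span K {c : A | ∃ a b : A, c = brk a b} = ⊤)
    (hcenter : ∀ a : A, (∀ b : A, brk a b = 0) → a = 0) {m : E →ₗ[K] E →ₗ[K] E}
    (hGD : IsGD (fun u v => m u v) (fun u v => flagBr hc brk u v))
    (hm : ∀ a c : A, m a c = circ a c) :
    ∃ S T k, m = flagMul hx0 hc circ S T k := by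
  have hp : coord hx0 hc ∘ₗ m.flip x ∘ₗ A.subtype = 0 :=
    linearMap_eq_zero_of_perfect hperf fun a c => by
      simpa [hm] using congrArg (coord hx0 hc) (hGD.2.2 x a c)
  have hq : coord hx0 hc ∘ₗ m x ∘ₗ A.subtype = 0 :=
    linearMap_eq_zero_of_perfect hperf fun a c => by
      simpa [hm] using congrArg (coord hx0 hc) (hGD.2.2 a x c)
  have hbrk : brk.IsAlt := fun a => by simpa using hGD.2.1.1 a
  have ha1 : proj hc (m x x) = 0 := hcenter _ fun c => by
    simpa [hm, ← hbrk.neg c] using congrArg (proj hc) (hGD.2.2 c x x)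
  refine ⟨proj hc ∘ₗ m x ∘ₗ A.subtype, proj hc ∘ₗ m.flip x ∘ₗ A.subtype, coord hx0 hc (m x x),
    linearMap₂_ext_of_codisjoint hc.codisjoint (by simp [hm]) (fun a => ?_) (fun a => ?_) ?_⟩
  · simpa using (coe_proj_of_coord_eq_zero hx0 hc (LinearMap.congr_fun hp a)).symm
  · simpa using (coe_proj_of_coord_eq_zero hx0 hc (LinearMap.congr_fun hq a)).symm
  · simpa using (coord_smul_of_proj_eq_zero hx0 hc ha1).symm

theorem exists_flagStr_eq (hGD : IsGD (fun a b => circ a b) (fun a b => brk a b))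
    (hperf : Submodule.span K {c : A | ∃ a b : A, c = brk a b} = ⊤)
    (hcenter : ∀ a : A, (∀ b : A, brk a b = 0) → a = 0) (s : GDStrOn A circ brk)
    (hs : ∀ a : A, s.1.2 x a = 0) :
    ∃ S T k, ∃ h : IsSF5 circ brk S T k, flagStr hx0 hc hGD h = s := by
  obtain ⟨⟨m, b⟩, hGDs, hres⟩ := s
  obtain rfl : b = flagBr hc brk :=
    eq_flagBr_of_bracket_self_eq_zero hc hGDs.2.1 (fun a c => (hres a c).2) hs
  obtain ⟨S, T, k, rfl⟩ := exists_eq_flagMul hx0 hc hperf hcenter hGDs fun a c => (hres a c).1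
  exact ⟨S, T, k, isSF5_of_isGD_flag hx0 hc hGDs, rfl⟩

end Extensions

section Normalization

variable {K E : Type*} [Field K] [AddCommGroup E] [Module K E] {A : Submodule K E} {x : E}
  {circ brk : A →ₗ[K] A →ₗ[K] A}

theorem exists_bracket_self_eq_brk (hx0 : x ≠ 0) (hc : IsCompl A (K ∙ x))
    (hperf : Submodule.span K {c : A | ∃ a b : A, c = brk a b} = ⊤)
    (hder : ∀ D : A →ₗ[K] A, (∀ a b : A, D (brk a b) = brk (D a) b + brk a (D b)) →
      ∃ a0 : A, ∀ a : A, D a = brk a0 a)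
    {b : E →ₗ[K] E →ₗ[K] E} (hLie : IsLieBracket fun u v => b u v)
    (hb : ∀ a c : A, b a c = brk a c) :
    ∃ a0 : A, ∀ a : A, b x a = brk a0 a := by
  obtain ⟨D, hDdef⟩ : ∃ D : A →ₗ[K] A, proj hc ∘ₗ b x ∘ₗ A.subtype = D := ⟨_, rfl⟩
  have hD (a : A) : b x a = D a := by
    rw [← hDdef]
    exact (coe_proj_of_coord_eq_zero hx0 hc
      (coord_bracket_self_eq_zero hx0 hc hperf hLie hb a)).symm
  obtain ⟨a0, ha0⟩ := hder D fun a c => Subtype.ext (by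
    have hjac : b x (b a c) = b (b x a) c + b a (b x c) := hLie.2 x a c
    simpa [hb, hD] using hjac)
  exact ⟨a0, fun a => by rw [hD, ha0]⟩

theorem exists_equiv_bracket_self_eq_zero (hx0 : x ≠ 0) (hc : IsCompl A (K ∙ x))
    (hperf : Submodule.span K {c : A | ∃ a b : A, c = brk a b} = ⊤)
    (hder : ∀ D : A →ₗ[K] A, (∀ a b : A, D (brk a b) = brk (D a) b + brk a (D b)) →
      ∃ a0 : A, ∀ a : A, D a = brk a0 a)
    (s : GDStrOn A circ brk) :
    ∃ s' : GDStrOn A circ brk, GDStrEquiv A circ brk s' s ∧ ∀ a : A, s'.1.2 x a = 0 := by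
  obtain ⟨a0, ha0⟩ :=
    exists_bracket_self_eq_brk hx0 hc hperf hder s.2.1.2.1 fun a c => (s.2.2 a c).2
  have hy : coord hx0 hc (x - a0) ≠ 0 := by simp
  refine ⟨s.pullback (fixingEquiv hx0 hc (x - a0) hy) (fixingEquiv_coe hx0 hc _ hy),
    s.pullback_equiv _ _, fun a => ?_⟩
  simp [GDStrOn.pullback, ha0, (s.2.2 a0 a).2]

end Normalization

theorem extd_bijection_SF5
    {K E : Type*} [Field K] [AddCommGroup E] [Module K E]
    (A : Submodule K E) (x : E) (hx : x ∉ A) (hc : IsCompl A (K ∙ x))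
    (circ brk : ↥A →ₗ[K] ↥A →ₗ[K] ↥A)
    (hGD : IsGD (fun a b => circ a b) (fun a b => brk a b))
    (hperf : Submodule.span K {c : ↥A | ∃ a b : ↥A, c = brk a b} = ⊤)
    (hder : ∀ D : ↥A →ₗ[K] ↥A,
      (∀ a b : ↥A, D (brk a b) = brk (D a) b + brk a (D b)) →
      ∃ a0 : ↥A, ∀ a : ↥A, D a = brk a0 a)
    -- the center of (A, [·,·]) is trivial
    (hcenter : ∀ a : ↥A, (∀ b : ↥A, brk a b = 0) → a = 0) :
    Nonempty
      (Quot (fun d d' : {d : FlagData K ↥A // IsFlagDatum circ brk d ∧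
               d.p = 0 ∧ d.q = 0 ∧ d.eta = 0 ∧ d.D = 0 ∧ d.a1 = 0} =>
          -- equivalence ≈ on SF5(A)
          ∃ β : K, β ≠ 0 ∧ d.1.S = β • d'.1.S ∧ d.1.T = β • d'.1.T ∧ d.1.k = β * d'.1.k)
      ≃ Quot (GDStrEquiv A circ brk)) := by
  have hx0 : x ≠ 0 := fun h => hx (h ▸ A.zero_mem)
  refine nonempty_quot_equiv gdStrEquiv_equivalence
    (fun d => flagStr hx0 hc hGD (isSF5_of_isFlagDatum d.2))
    (fun d d' => ⟨?_, exists_smul_of_flagStr_equiv hx0 hc hGD _ _ hcenter⟩) fun s => ?_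
  · rintro ⟨β, hβ, hS, hT, hk⟩
    exact flagStr_equiv_of_smul hx0 hc hGD _ _ hβ hS hT hk
  · obtain ⟨s', hs's, hs'⟩ := exists_equiv_bracket_self_eq_zero hx0 hc hperf hder s
    obtain ⟨S, T, k, h, rfl⟩ := exists_flagStr_eq hx0 hc hGD hperf hcenter s' hs'
    exact ⟨⟨⟨0, 0, S, T, 0, k, 0, 0⟩, isFlagDatum_iff_isSF5.2 h, rfl, rfl, rfl, rfl, rfl⟩, hs's⟩

end GDExt
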